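/- Let m ≥ 3 be an integer. Then there exists κ > 0 such that for every positive integer N there is a set A ⊆ [N] with |A| ≥ κ·N^r, where r = log(m−1) / log((6m−5)(m−2)+1), such that every tuple (x₁,x₂,x₃,x₁',x₂',x₃') ∈ A⁶ satisfying m·x₁ + (2m−2)·x₂ + (3m−3)·x₃ = m·x₁' + (2m−2)·x₂' + (3m−3)·x₃' has x₁ = x₁'. In particular, A contains no solution of this equation with all six entries pairwise distinct. -/

import Mathlib

/-!
Take `n = m - 1` and the base `b = (6m-5)(m-2)+1 = (6n+1)(n-1)+1`, and let `A` be the set of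
numbers `1 + ∑ dᵢ bⁱ` with `k = ⌊log_b N⌋` base-`b` digits `dᵢ ∈ {0, …, n-1}`, so `|A| = n^k`.
The coefficients `m, 2m-2, 3m-3` sum to `6n+1`, so `m x₁ + (2m-2) x₂ + (3m-3) x₃` is computed
digit by digit without carries. Hence both sides of the equation have the same digits, and since
`m ≡ 1` while `2m-2 ≡ 3m-3 ≡ 0 (mod n)`, each digit of `x₁` is congruent mod `n`, hence equal,
to the corresponding digit of `y₁`. Finally `N < b^(k+1)` gives `n^k ≥ N^(log n / log b) / n`.
-/

open Finset

def digitVal (b : ℕ) {k : ℕ} (d : Fin k → ℕ) : ℕ := ∑ i, d i * b ^ (i : ℕ)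

section digitVal

variable {b k : ℕ}

@[simp]
lemma digitVal_add (d e : Fin k → ℕ) : digitVal b (d + e) = digitVal b d + digitVal b e := by
  simp only [digitVal, Pi.add_apply, add_mul, sum_add_distrib]

@[simp]
lemma digitVal_smul (a : ℕ) (d : Fin k → ℕ) : digitVal b (a • d) = a * digitVal b d := by
  simp only [digitVal, Pi.smul_apply, smul_eq_mul, mul_sum, mul_assoc]

lemma digitVal_lt_pow {d : Fin k → ℕ} (hd : ∀ i, d i < b) : digitVal b d < b ^ k := by
  simpa [digitVal, finFunctionFinEquiv_apply] using
    (finFunctionFinEquiv (fun i ↦ (⟨d i, hd i⟩ : Fin b))).isLt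

lemma digitVal_injective_of_lt {d e : Fin k → ℕ} (hd : ∀ i, d i < b) (he : ∀ i, e i < b)
    (h : digitVal b d = digitVal b e) : d = e := by
  have hfin : (fun i ↦ (⟨d i, hd i⟩ : Fin b)) = fun i ↦ ⟨e i, he i⟩ :=
    finFunctionFinEquiv.injective (Fin.ext (by simpa [finFunctionFinEquiv_apply, digitVal] using h))
  funext i
  exact congrArg Fin.val (congrFun hfin i)

end digitVal

lemma eq_of_digitVal_combination_eq {n b k : ℕ} (hb : (6 * n + 1) * (n - 1) < b)
    {p q r p' q' r' : Fin k → ℕ} (hp : ∀ i, p i < n) (hq : ∀ i, q i < n) (hr : ∀ i, r i < n)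
    (hp' : ∀ i, p' i < n) (hq' : ∀ i, q' i < n) (hr' : ∀ i, r' i < n)
    (h : (n + 1) * digitVal b p + 2 * n * digitVal b q + 3 * n * digitVal b r
      = (n + 1) * digitVal b p' + 2 * n * digitVal b q' + 3 * n * digitVal b r') :
    p = p' := by
  have no_carry : ∀ {x y z : Fin k → ℕ}, (∀ i, x i < n) → (∀ i, y i < n) → (∀ i, z i < n) →
      ∀ i, ((n + 1) • x + (2 * n) • y + (3 * n) • z) i < b := by
    intro x y z hx hy hz i
    have := hx i; have := hy i; have := hz i
    calc ((n + 1) • x + (2 * n) • y + (3 * n) • z) i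
        ≤ (n + 1) * (n - 1) + 2 * n * (n - 1) + 3 * n * (n - 1) := by
          simp only [Pi.add_apply, Pi.smul_apply, smul_eq_mul]
          gcongr <;> omega
      _ = (6 * n + 1) * (n - 1) := by ring
      _ < b := hb
  have hdigits := digitVal_injective_of_lt (no_carry hp hq hr) (no_carry hp' hq' hr')
    (by simpa only [digitVal_add, digitVal_smul] using h)
  have mod_n : ∀ x y z : ℕ, ((n + 1) * x + 2 * n * y + 3 * n * z) % n = x % n := fun x y z ↦ by
    rw [show (n + 1) * x + 2 * n * y + 3 * n * z = x + n * (x + 2 * y + 3 * z) by ring,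
      Nat.add_mul_mod_self_left]
  funext i
  have hi := congrFun hdigits i
  simp only [Pi.add_apply, Pi.smul_apply, smul_eq_mul] at hi
  have hmod := mod_n (p i) (q i) (r i)
  rw [hi, mod_n, Nat.mod_eq_of_lt (hp i), Nat.mod_eq_of_lt (hp' i)] at hmod
  exact hmod.symm

def digitSet (n b k : ℕ) : Finset ℤ :=
  (Fintype.piFinset fun _ : Fin k ↦ range n).image fun d ↦ ((1 + digitVal b d : ℕ) : ℤ)

section digitSet

variable {n b k : ℕ}

lemma card_digitSet (hnb : n ≤ b) : #(digitSet n b k) = n ^ k := by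
  rw [digitSet, card_image_of_injOn, Fintype.card_piFinset, prod_const, card_range, card_univ,
    Fintype.card_fin]
  intro d hd e he h
  simp only [mem_coe, Fintype.mem_piFinset, mem_range] at hd he
  exact digitVal_injective_of_lt (fun i ↦ (hd i).trans_le hnb) (fun i ↦ (he i).trans_le hnb)
    (by simpa using h)

lemma digitSet_subset_Icc (hnb : n ≤ b) : digitSet n b k ⊆ Icc 1 ((b ^ k : ℕ) : ℤ) := by
  intro x hx
  obtain ⟨d, hd, rfl⟩ := mem_image.1 hx
  rw [Fintype.mem_piFinset] at hd
  have := digitVal_lt_pow fun i ↦ (mem_range.1 (hd i)).trans_le hnb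
  rw [mem_Icc]
  constructor <;> norm_cast <;> omega

end digitSet

lemma rpow_log_div_log_le_pow_succ_log {b : ℕ} (hb : 1 < b) {c : ℝ} (hc : 1 ≤ c) (N : ℕ) :
    (N : ℝ) ^ (Real.log c / Real.log b) ≤ c ^ (Nat.log b N + 1) := by
  have hb' : (1 : ℝ) < b := by exact_mod_cast hb
  have hN : (N : ℝ) ≤ (b : ℝ) ^ (Nat.log b N + 1) := by
    exact_mod_cast (Nat.lt_pow_succ_log_self hb N).le
  calc (N : ℝ) ^ (Real.log c / Real.log b)
      ≤ ((b : ℝ) ^ (Nat.log b N + 1)) ^ Real.logb b c := by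
        rw [← Real.log_div_log]
        exact Real.rpow_le_rpow N.cast_nonneg hN (Real.logb_nonneg hb' hc)
    _ = c ^ (Nat.log b N + 1) := by
        rw [← Real.rpow_natCast, ← Real.rpow_mul (by positivity), mul_comm, Real.rpow_mul
          (by positivity), Real.rpow_logb (by positivity) hb'.ne' (by positivity),
          Real.rpow_natCast]

lemma le_card_digitSet {n b : ℕ} (hb : 1 < b) (hn : 1 ≤ n) (hnb : n ≤ b) (N : ℕ) :
    (n : ℝ)⁻¹ * (N : ℝ) ^ (Real.log n / Real.log b) ≤ #(digitSet n b (Nat.log b N)) := by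
  have hn' : (1 : ℝ) ≤ n := by exact_mod_cast hn
  calc (n : ℝ)⁻¹ * (N : ℝ) ^ (Real.log n / Real.log b)
      ≤ (n : ℝ)⁻¹ * (n : ℝ) ^ (Nat.log b N + 1) := by
        gcongr
        exact rpow_log_div_log_le_pow_succ_log hb hn' N
    _ = #(digitSet n b (Nat.log b N)) := by
        rw [card_digitSet hnb]
        push_cast
        field_simp
        ring

lemma eq_of_mem_digitSet {m b k : ℕ} (hm : 1 ≤ m) (hb : (6 * m - 5) * (m - 2) < b)
    {x₁ x₂ x₃ y₁ y₂ y₃ : ℤ}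
    (hx₁ : x₁ ∈ digitSet (m - 1) b k) (hx₂ : x₂ ∈ digitSet (m - 1) b k)
    (hx₃ : x₃ ∈ digitSet (m - 1) b k) (hy₁ : y₁ ∈ digitSet (m - 1) b k)
    (hy₂ : y₂ ∈ digitSet (m - 1) b k) (hy₃ : y₃ ∈ digitSet (m - 1) b k)
    (h : (m : ℤ) * x₁ + (2 * (m : ℤ) - 2) * x₂ + (3 * (m : ℤ) - 3) * x₃
      = (m : ℤ) * y₁ + (2 * (m : ℤ) - 2) * y₂ + (3 * (m : ℤ) - 3) * y₃) :
    x₁ = y₁ := by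
  obtain ⟨n, rfl⟩ := Nat.exists_eq_add_of_le' hm
  rw [show 6 * (n + 1) - 5 = 6 * n + 1 by omega, show n + 1 - 2 = n - 1 by omega] at hb
  simp only [digitSet, Nat.add_sub_cancel, mem_image, Fintype.mem_piFinset, mem_range]
    at hx₁ hx₂ hx₃ hy₁ hy₂ hy₃
  obtain ⟨p, hp, rfl⟩ := hx₁
  obtain ⟨q, hq, rfl⟩ := hx₂
  obtain ⟨r, hr, rfl⟩ := hx₃
  obtain ⟨p', hp', rfl⟩ := hy₁
  obtain ⟨q', hq', rfl⟩ := hy₂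
  obtain ⟨r', hr', rfl⟩ := hy₃
  rw [eq_of_digitVal_combination_eq hb hp hq hr hp' hq' hr'
    (by zify; push_cast at h; linear_combination h)]

/-- Let `m ≥ 3` be an integer. Then there is `κ > 0` such that for every positive
integer `N` there is `A ⊆ [N]` with `|A| ≥ κ·N^r`, `r = log(m−1)/log((6m−5)(m−2)+1)`, such that
every tuple in `A⁶` satisfying `m·x₁+(2m−2)·x₂+(3m−3)·x₃ = m·y₁+(2m−2)·y₂+(3m−3)·y₃` has
`x₁ = y₁`; in particular `A` has no solutions with all six entries pairwise distinct. -/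
theorem statement11 (m : ℕ) (hm : 3 ≤ m) :
    ∃ κ : ℝ, 0 < κ ∧ ∀ N : ℕ, 0 < N → ∃ A : Finset ℤ,
      A ⊆ Finset.Icc 1 (N : ℤ) ∧
      κ * (N : ℝ) ^ (Real.log ((m : ℝ) - 1) /
        Real.log ((6 * (m : ℝ) - 5) * ((m : ℝ) - 2) + 1)) ≤ A.card ∧
      (∀ x₁ x₂ x₃ y₁ y₂ y₃ : ℤ, x₁ ∈ A → x₂ ∈ A → x₃ ∈ A → y₁ ∈ A → y₂ ∈ A → y₃ ∈ A →
        (m : ℤ) * x₁ + (2 * (m : ℤ) - 2) * x₂ + (3 * (m : ℤ) - 3) * x₃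
          = (m : ℤ) * y₁ + (2 * (m : ℤ) - 2) * y₂ + (3 * (m : ℤ) - 3) * y₃ → x₁ = y₁) ∧
      ¬ ∃ x₁ x₂ x₃ y₁ y₂ y₃ : ℤ,
          x₁ ∈ A ∧ x₂ ∈ A ∧ x₃ ∈ A ∧ y₁ ∈ A ∧ y₂ ∈ A ∧ y₃ ∈ A ∧
          [x₁, x₂, x₃, y₁, y₂, y₃].Pairwise (· ≠ ·) ∧
          (m : ℤ) * x₁ + (2 * (m : ℤ) - 2) * x₂ + (3 * (m : ℤ) - 3) * x₃
            = (m : ℤ) * y₁ + (2 * (m : ℤ) - 2) * y₂ + (3 * (m : ℤ) - 3) * y₃ := by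
  set b := (6 * m - 5) * (m - 2) + 1 with hb_def
  have hbase : 6 * m - 5 ≤ (6 * m - 5) * (m - 2) := Nat.le_mul_of_pos_right _ (by omega)
  have hb : 1 < b := by omega
  have hnb : m - 1 ≤ b := by omega
  have hexp : Real.log ((m : ℝ) - 1) / Real.log ((6 * (m : ℝ) - 5) * ((m : ℝ) - 2) + 1)
      = Real.log ((m - 1 : ℕ) : ℝ) / Real.log b := by
    push_cast [hb_def, Nat.cast_sub (by omega : 5 ≤ 6 * m), Nat.cast_sub (by omega : 2 ≤ m),
      Nat.cast_sub (by omega : 1 ≤ m)]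
    rfl
  refine ⟨((m - 1 : ℕ) : ℝ)⁻¹, inv_pos.2 (by exact_mod_cast (by omega : 0 < m - 1)),
    fun N hN ↦ ?_⟩
  have hm₁ : 1 ≤ m := by omega
  refine ⟨digitSet (m - 1) b (Nat.log b N), ?_, ?_,
    fun _ _ _ _ _ _ ↦ eq_of_mem_digitSet hm₁ (Nat.lt_succ_self _), ?_⟩
  · exact (digitSet_subset_Icc hnb).trans
      (Icc_subset_Icc le_rfl (by exact_mod_cast Nat.pow_log_le_self b hN.ne'))
  · rw [hexp]
    exact le_card_digitSet hb (by omega) hnb N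
  · rintro ⟨x₁, x₂, x₃, y₁, y₂, y₃, hx₁, hx₂, hx₃, hy₁, hy₂, hy₃, hdistinct, h⟩
    exact List.rel_of_pairwise_cons hdistinct (by simp)
      (eq_of_mem_digitSet hm₁ (Nat.lt_succ_self _) hx₁ hx₂ hx₃ hy₁ hy₂ hy₃ h)
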